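/- Let a = 1, set C = π²σ², and define F(t,x) = |V(t, ξ̄ + x)|² = e^{−2C(x+Δ/2)²} + e^{−2C(x−Δ/2)²} + 2cos(2πΔt)·e^{−C(2x² + Δ²/2)}. For k ∈ ℤ parametrize the ellipse E_k by x(u) = a_e·cos u and t(u) = (k + 1/2)/Δ + b_e·sin u for u ∈ [0,2π], where a_e = 1/(√2·πσ) and b_e = arccos(1 − CΔ²)/(2πΔ). Then there exist constants K > 0 and Δ₀ > 0, depending only on σ, such that for every 0 < Δ ≤ Δ₀ and every k ∈ ℤ, the arc-length line integral ∫₀^{2π} |∂_x F(t(u), x(u))| · √(x′(u)² + (b_e cos u)²) du ≤ K·Δ². -/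

import Mathlib

noncomputable section

open MeasureTheory

/-- The squared modulus of the STFT in shifted coordinates (balanced amplitudes `a = 1`):
`F(t,x) = |V(t, ξ̄ + x)|² = e^{−2C(x+Δ/2)²} + e^{−2C(x−Δ/2)²} + 2cos(2πΔt)·e^{−C(2x²+Δ²/2)}`
with `C = π²σ²`. -/
def Ffun (σ Δ t x : ℝ) : ℝ :=
  Real.exp (-(2 * Real.pi ^ 2 * σ ^ 2 * (x + Δ / 2) ^ 2)) +
    Real.exp (-(2 * Real.pi ^ 2 * σ ^ 2 * (x - Δ / 2) ^ 2)) +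
    2 * Real.cos (2 * Real.pi * Δ * t) *
      Real.exp (-(Real.pi ^ 2 * σ ^ 2 * (2 * x ^ 2 + Δ ^ 2 / 2)))

/-- The frequency semi-axis of the bubble ellipse, `a_e = 1/(√2 πσ)`. -/
def aEll (σ : ℝ) : ℝ := 1 / (Real.sqrt 2 * Real.pi * σ)

/-- The time semi-axis of the bubble ellipse, `b_e = arccos(1 − CΔ²)/(2πΔ)`. -/
def bEll (σ Δ : ℝ) : ℝ :=
  Real.arccos (1 - Real.pi ^ 2 * σ ^ 2 * Δ ^ 2) / (2 * Real.pi * Δ)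

/-!
Write `C = π²σ²` and `s = 2CΔx`. Then `F = 2 e^{−C(2x² + Δ²/2)} (cosh s + cos(2πΔt))`, so
`∂ₓF = 4C e^{−C(2x² + Δ²/2)} (Δ sinh s − 2x (cosh s − 1) − 2x (1 + cos(2πΔt)))`.
For `|x| ≤ 1/(πσ)` and `Δ ≤ 1/(2πσ)` we have `|s| ≤ 1`, so `sinh s = O(s)` and `cosh s − 1 = O(s²)`
make the first two terms `O(Δ²)`. On `E_k` the phase is `2πΔt = (2k + 1)π + θ sin u` with
`θ = arccos(1 − CΔ²)`, hence `1 + cos(2πΔt) = 1 − cos(θ sin u) ≤ 1 − cos θ = CΔ²`, and the last term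
is `O(Δ²)` as well. Finally the speed of the ellipse is at most `a_e + b_e`, where `b_e ≤ πσ`
because `1 − cos θ ≥ 2θ²/π²`.
-/

open Real

lemma abs_cosh_sub_one_le {s : ℝ} (hs : |s| ≤ 1) : |cosh s - 1| ≤ s ^ 2 := by
  have hpos := abs_exp_sub_one_sub_id_le hs
  have hneg := abs_exp_sub_one_sub_id_le (x := -s) (by rwa [abs_neg])
  rw [cosh_eq, show (exp s + exp (-s)) / 2 - 1
    = ((exp s - 1 - s) + (exp (-s) - 1 - -s)) / 2 by ring, abs_div, abs_two]
  rw [neg_sq] at hneg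
  linarith [abs_add_le (exp s - 1 - s) (exp (-s) - 1 - -s)]

lemma abs_sinh_le_two_mul_abs {s : ℝ} (hs : |s| ≤ 1) : |sinh s| ≤ 2 * |s| := by
  have hpos := abs_exp_sub_one_sub_id_le hs
  have hneg := abs_exp_sub_one_sub_id_le (x := -s) (by rwa [abs_neg])
  rw [neg_sq] at hneg
  have hsinh : sinh s = s + ((exp s - 1 - s) - (exp (-s) - 1 - -s)) / 2 := by
    rw [sinh_eq]; ring
  have hs2 : s ^ 2 ≤ |s| := by nlinarith [sq_abs s, abs_nonneg s]
  rw [hsinh]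
  calc |s + ((exp s - 1 - s) - (exp (-s) - 1 - -s)) / 2|
      ≤ |s| + (|exp s - 1 - s| + |exp (-s) - 1 - -s|) / 2 := by
        refine (abs_add_le _ _).trans (add_le_add_right ?_ _)
        rw [abs_div, abs_two]
        gcongr
        exact abs_sub _ _
    _ ≤ 2 * |s| := by linarith

lemma arccos_one_sub_sq_le {y : ℝ} (hy : 0 ≤ y) : arccos (1 - y) ^ 2 ≤ π ^ 2 / 2 * y := by
  rcases le_or_gt y 2 with hy2 | hy2
  · have hcos := cos_le_one_sub_mul_cos_sq (x := arccos (1 - y))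
      (by rw [abs_of_nonneg (arccos_nonneg _)]; exact arccos_le_pi _)
    rw [cos_arccos (by linarith) (by linarith)] at hcos
    have hπ : 0 < π ^ 2 := by positivity
    field_simp at hcos
    nlinarith
  · rw [arccos_of_le_neg_one (by linarith)]
    nlinarith [pi_pos]

lemma one_sub_cos_mul_sin_le {θ : ℝ} (hθ₀ : 0 ≤ θ) (hθπ : θ ≤ π) (u : ℝ) :
    1 - cos (θ * sin u) ≤ 1 - cos θ := by
  have h : |θ * sin u| ≤ θ := by
    rw [abs_mul, abs_of_nonneg hθ₀]
    exact mul_le_of_le_one_right hθ₀ (abs_sin_le_one u)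
  rw [← cos_abs (θ * sin u)]
  linarith [cos_le_cos_of_nonneg_of_le_pi (abs_nonneg _) hθπ h]

lemma sqrt_ellipse_speed_le (a b u : ℝ) :
    √((a * sin u) ^ 2 + (b * cos u) ^ 2) ≤ |a| + |b| := by
  rw [sqrt_le_left (by positivity)]
  have hs := sin_sq_add_cos_sq u
  nlinarith [sq_abs a, sq_abs b, sq_nonneg (sin u), sq_nonneg (cos u),
    mul_nonneg (abs_nonneg a) (abs_nonneg b)]

lemma Ffun_eq (σ Δ t x : ℝ) :
    Ffun σ Δ t x = 2 * exp (-(π ^ 2 * σ ^ 2 * (2 * x ^ 2 + Δ ^ 2 / 2))) *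
      (cosh (2 * π ^ 2 * σ ^ 2 * Δ * x) + cos (2 * π * Δ * t)) := by
  have hplus : -(2 * π ^ 2 * σ ^ 2 * (x + Δ / 2) ^ 2)
      = -(π ^ 2 * σ ^ 2 * (2 * x ^ 2 + Δ ^ 2 / 2)) + 2 * π ^ 2 * σ ^ 2 * Δ * x * -1 := by ring
  have hminus : -(2 * π ^ 2 * σ ^ 2 * (x - Δ / 2) ^ 2)
      = -(π ^ 2 * σ ^ 2 * (2 * x ^ 2 + Δ ^ 2 / 2)) + 2 * π ^ 2 * σ ^ 2 * Δ * x := by ring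
  rw [Ffun, hplus, hminus, exp_add, exp_add, cosh_eq, mul_neg_one]
  ring

lemma hasDerivAt_Ffun (σ Δ t x : ℝ) :
    HasDerivAt (Ffun σ Δ t)
      (4 * π ^ 2 * σ ^ 2 * exp (-(π ^ 2 * σ ^ 2 * (2 * x ^ 2 + Δ ^ 2 / 2))) *
        (Δ * sinh (2 * π ^ 2 * σ ^ 2 * Δ * x) -
          2 * x * (cosh (2 * π ^ 2 * σ ^ 2 * Δ * x) + cos (2 * π * Δ * t)))) x := by
  have hgauss : HasDerivAt (fun y => -(π ^ 2 * σ ^ 2 * (2 * y ^ 2 + Δ ^ 2 / 2)))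
      (-(π ^ 2 * σ ^ 2 * (2 * (2 * x)))) x := by
    refine ((((hasDerivAt_pow 2 x).const_mul 2).add_const (Δ ^ 2 / 2)).const_mul
      (π ^ 2 * σ ^ 2)).neg.congr_deriv ?_
    norm_num
  have hcosh : HasDerivAt (fun y => cosh (2 * π ^ 2 * σ ^ 2 * Δ * y) + cos (2 * π * Δ * t))
      (sinh (2 * π ^ 2 * σ ^ 2 * Δ * x) * (2 * π ^ 2 * σ ^ 2 * Δ)) x := by
    simpa using (((hasDerivAt_id x).const_mul (2 * π ^ 2 * σ ^ 2 * Δ)).cosh).add_const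
      (cos (2 * π * Δ * t))
  rw [show Ffun σ Δ t = _ from funext (Ffun_eq σ Δ t)]
  refine ((hgauss.exp.const_mul 2).mul hcosh).congr_deriv ?_
  ring

lemma abs_deriv_Ffun_le {σ Δ t x : ℝ} (hσ : 0 < σ) (hΔ₀ : 0 ≤ Δ) (hΔ : Δ ≤ 1 / (2 * π * σ))
    (hx : |x| ≤ 1 / (π * σ)) (ht : 1 + cos (2 * π * Δ * t) ≤ π ^ 2 * σ ^ 2 * Δ ^ 2) :
    |deriv (Ffun σ Δ t) x| ≤ 56 * π ^ 3 * σ ^ 3 * Δ ^ 2 := by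
  have hL : 0 < π * σ := by positivity
  set L := π * σ
  set s := 2 * π ^ 2 * σ ^ 2 * Δ * x
  set c := cos (2 * π * Δ * t)
  have hLx : L * |x| ≤ 1 := by rwa [le_div_iff₀' hL] at hx
  have hLΔ : 2 * L * Δ ≤ 1 := by
    rw [le_div_iff₀' (by positivity)] at hΔ; linarith
  have hs : |s| = 2 * L * Δ * (L * |x|) := by
    rw [abs_mul, abs_of_nonneg (by positivity)]; ring
  have hs1 : |s| ≤ 1 := by
    rw [hs]; nlinarith [abs_nonneg x, mul_nonneg hL.le (abs_nonneg x)]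
  have hc : 0 ≤ 1 + c := by linarith [neg_one_le_cos (2 * π * Δ * t)]
  have hinner : |Δ * sinh s - 2 * x * (cosh s + c)| ≤ 14 * L * Δ ^ 2 := by
    have hsinh : |Δ * sinh s| ≤ 4 * L * Δ ^ 2 := by
      rw [abs_mul, abs_of_nonneg hΔ₀]
      calc Δ * |sinh s| ≤ Δ * (2 * |s|) := by gcongr; exact abs_sinh_le_two_mul_abs hs1
        _ = 4 * L * Δ ^ 2 * (L * |x|) := by rw [hs]; ring
        _ ≤ 4 * L * Δ ^ 2 := mul_le_of_le_one_right (by positivity) hLx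
    have hcosh : |2 * x * (cosh s - 1)| ≤ 8 * L * Δ ^ 2 := by
      rw [abs_mul, abs_mul, abs_two]
      calc 2 * |x| * |cosh s - 1| ≤ 2 * |x| * |s| ^ 2 := by
            rw [sq_abs]; gcongr; exact abs_cosh_sub_one_le hs1
        _ = 8 * L * Δ ^ 2 * (L * |x|) ^ 3 := by rw [hs]; field_simp; ring
        _ ≤ 8 * L * Δ ^ 2 :=
            mul_le_of_le_one_right (by positivity) (pow_le_one₀ (by positivity) hLx)
    have hcos : |2 * x * (1 + c)| ≤ 2 * L * Δ ^ 2 := by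
      rw [abs_mul, abs_mul, abs_two, abs_of_nonneg hc]
      calc 2 * |x| * (1 + c) ≤ 2 * |x| * (L ^ 2 * Δ ^ 2) := by rw [mul_pow]; gcongr
        _ = 2 * L * Δ ^ 2 * (L * |x|) := by ring
        _ ≤ 2 * L * Δ ^ 2 := mul_le_of_le_one_right (by positivity) hLx
    rw [show Δ * sinh s - 2 * x * (cosh s + c)
      = Δ * sinh s - 2 * x * (cosh s - 1) - 2 * x * (1 + c) by ring]
    linarith [abs_sub (Δ * sinh s - 2 * x * (cosh s - 1)) (2 * x * (1 + c)),
      abs_sub (Δ * sinh s) (2 * x * (cosh s - 1))]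
  have hgauss : exp (-(π ^ 2 * σ ^ 2 * (2 * x ^ 2 + Δ ^ 2 / 2))) ≤ 1 :=
    exp_le_one_iff.2 (neg_nonpos.2 (by positivity))
  rw [(hasDerivAt_Ffun σ Δ t x).deriv, abs_mul, abs_mul, abs_of_pos (by positivity),
    abs_of_pos (exp_pos _)]
  calc 4 * π ^ 2 * σ ^ 2 * exp (-(π ^ 2 * σ ^ 2 * (2 * x ^ 2 + Δ ^ 2 / 2))) *
        |Δ * sinh s - 2 * x * (cosh s + c)| ≤ 4 * π ^ 2 * σ ^ 2 * 1 * (14 * L * Δ ^ 2) := by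
        gcongr
    _ = 56 * π ^ 3 * σ ^ 3 * Δ ^ 2 := by ring

lemma abs_aEll_le {σ : ℝ} (hσ : 0 < σ) : |aEll σ| ≤ 1 / (π * σ) := by
  rw [aEll, abs_of_pos (by positivity)]
  gcongr
  exact le_mul_of_one_le_left (by positivity) (one_le_sqrt.2 one_le_two)

lemma abs_bEll_le {σ Δ : ℝ} (hσ : 0 < σ) (hΔ : 0 < Δ) : |bEll σ Δ| ≤ π * σ := by
  have hsq := arccos_one_sub_sq_le (y := π ^ 2 * σ ^ 2 * Δ ^ 2) (by positivity)
  have hθ : arccos (1 - π ^ 2 * σ ^ 2 * Δ ^ 2) ≤ π ^ 2 * σ * Δ := by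
    rw [← pow_le_pow_iff_left₀ (arccos_nonneg _) (by positivity) two_ne_zero]
    nlinarith [pow_pos pi_pos 4, pow_pos (mul_pos hσ hΔ) 2]
  rw [bEll, abs_of_nonneg (by have := arccos_nonneg (1 - π ^ 2 * σ ^ 2 * Δ ^ 2); positivity),
    div_le_iff₀ (by positivity)]
  nlinarith [pi_pos, mul_pos hσ hΔ]

lemma one_add_cos_ellipse_le {σ Δ : ℝ} (hΔ : 0 < Δ) (hΔ2 : π ^ 2 * σ ^ 2 * Δ ^ 2 ≤ 2)
    (k : ℤ) (u : ℝ) :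
    1 + cos (2 * π * Δ * (((k : ℝ) + 1 / 2) / Δ + bEll σ Δ * sin u)) ≤ π ^ 2 * σ ^ 2 * Δ ^ 2 := by
  set θ := arccos (1 - π ^ 2 * σ ^ 2 * Δ ^ 2) with hθ
  have hcosθ : cos θ = 1 - π ^ 2 * σ ^ 2 * Δ ^ 2 :=
    cos_arccos (by linarith) (sub_le_self _ (by positivity))
  have hphase : 2 * π * Δ * (((k : ℝ) + 1 / 2) / Δ + bEll σ Δ * sin u)
      = θ * sin u + π + k * (2 * π) := by
    rw [bEll, ← hθ]; field_simp; ring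
  rw [hphase, cos_add_int_mul_two_pi, cos_add_pi]
  linarith [one_sub_cos_mul_sin_le (arccos_nonneg _) (arccos_le_pi _) u (θ := θ)]

/-- there are constants `K, Δ₀ > 0` depending only on `σ` such that for every
gap `0 < Δ ≤ Δ₀` (with `Δ ≤ √2/(πσ)`) and every `k ∈ ℤ`, the arc-length integral of
`|∂_x F|` over the parametrized ellipse `E_k` is at most `K·Δ²`. -/
theorem stmt6 (σ : ℝ) (hσ : 0 < σ) :
    ∃ K > (0 : ℝ), ∃ Δ₀ > (0 : ℝ), ∀ ξ₀ ξ₁ : ℝ, ξ₀ < ξ₁ → ξ₁ - ξ₀ ≤ Δ₀ →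
      ξ₁ - ξ₀ ≤ Real.sqrt 2 / (Real.pi * σ) → ∀ k : ℤ,
        (∫ u in (0 : ℝ)..(2 * Real.pi),
          |deriv
              (fun x =>
                Ffun σ (ξ₁ - ξ₀)
                  (((k : ℝ) + 1 / 2) / (ξ₁ - ξ₀) + bEll σ (ξ₁ - ξ₀) * Real.sin u) x)
              (aEll σ * Real.cos u)| *
            Real.sqrt ((aEll σ * Real.sin u) ^ 2 + (bEll σ (ξ₁ - ξ₀) * Real.cos u) ^ 2))
          ≤ K * (ξ₁ - ξ₀) ^ 2 := by
  refine ⟨56 * π ^ 3 * σ ^ 3 * (1 / (π * σ) + π * σ) * (2 * π), by positivity,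
    1 / (2 * π * σ), by positivity, fun ξ₀ ξ₁ hlt hle _ k => ?_⟩
  set Δ := ξ₁ - ξ₀
  have hΔ : 0 < Δ := sub_pos.2 hlt
  have hΔ2 : π ^ 2 * σ ^ 2 * Δ ^ 2 ≤ 2 := by
    have h := (le_div_iff₀' (by positivity)).1 hle
    nlinarith [mul_pos (mul_pos pi_pos hσ) hΔ]
  have hbound : ∀ u ∈ Set.uIoc 0 (2 * π),
      ‖|deriv (Ffun σ Δ ((k + 1 / 2) / Δ + bEll σ Δ * sin u)) (aEll σ * cos u)| *
        √((aEll σ * sin u) ^ 2 + (bEll σ Δ * cos u) ^ 2)‖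
        ≤ 56 * π ^ 3 * σ ^ 3 * Δ ^ 2 * (1 / (π * σ) + π * σ) := by
    intro u _
    have hx : |aEll σ * cos u| ≤ 1 / (π * σ) := by
      rw [abs_mul]
      exact (mul_le_of_le_one_right (abs_nonneg _) (abs_cos_le_one u)).trans (abs_aEll_le hσ)
    rw [norm_of_nonneg (by positivity)]
    gcongr
    · exact abs_deriv_Ffun_le hσ hΔ.le hle hx (one_add_cos_ellipse_le hΔ hΔ2 k u)
    · exact (sqrt_ellipse_speed_le _ _ u).trans
        (add_le_add (abs_aEll_le hσ) (abs_bEll_le hσ hΔ))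
  calc _ ≤ ‖∫ u in (0 : ℝ)..(2 * π),
        |deriv (Ffun σ Δ ((k + 1 / 2) / Δ + bEll σ Δ * sin u)) (aEll σ * cos u)| *
          √((aEll σ * sin u) ^ 2 + (bEll σ Δ * cos u) ^ 2)‖ := le_norm_self _
    _ ≤ 56 * π ^ 3 * σ ^ 3 * Δ ^ 2 * (1 / (π * σ) + π * σ) * |2 * π - 0| :=
        intervalIntegral.norm_integral_le_of_norm_le_const hbound
    _ = _ := by rw [sub_zero, abs_of_pos two_pi_pos]; ring
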